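/- Let b = Ax_S + e' where x_S is s-sparse with support in S, let S' ⊆ {1,…,n} with |S'| = t, and suppose A satisfies the RIP of order s+t with constant δ_{s+t} < 1. Let z_p be any minimizer of ‖b − Az‖₂ over vectors z supported in S'. Then ‖x_S − z_p‖₂ ≤ (1/√(1 − δ_{s+t}²))·‖(x_S)_{complement of S'}‖₂ + (√(1+δ_t)/(1 − δ_{s+t}))·‖e'‖₂. -/

import Mathlib

open Finset Matrix

/-- Euclidean norm of a finitely-indexed real vector. -/
noncomputable def nrm {ι : Type*} [Fintype ι] (x : ι → ℝ) : ℝ :=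
  Real.sqrt (∑ i, x i ^ 2)

open Classical in
/-- Support of a vector as a finite set of indices. -/
noncomputable def spt {n : ℕ} (x : Fin n → ℝ) : Finset (Fin n) :=
  Finset.univ.filter fun i => x i ≠ 0

/-- Restriction of a vector to an index set: keep entries in `U`, zero the rest. -/
def restr {n : ℕ} (x : Fin n → ℝ) (U : Finset (Fin n)) : Fin n → ℝ :=
  fun i => if i ∈ U then x i else 0

/-- `A` satisfies the RIP of order `t` with constant `δ`. -/
def RIP {m n : ℕ} (A : Matrix (Fin m) (Fin n) ℝ) (t : ℕ) (δ : ℝ) : Prop :=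
  ∀ x : Fin n → ℝ, (spt x).card ≤ t →
    (1 - δ) * nrm x ^ 2 ≤ nrm (A.mulVec x) ^ 2 ∧
      nrm (A.mulVec x) ^ 2 ≤ (1 + δ) * nrm x ^ 2

/-!
Write `h = x_S - z_p` and split it as `h = u + c` with `u = h_{S'}` and `c = h_{S'ᶜ} = (x_S)_{S'ᶜ}`,
so `‖h‖² = ‖u‖² + ‖c‖²`. Least squares makes the residual `A h + e'` orthogonal to `A u`; combined
with the RIP near-orthogonality `⟨u, h⟩ ≤ ⟨A u, A h⟩ + δ ‖u‖ ‖h‖` (polarisation, as `u` and `h`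
are `(s+t)`-sparse) this gives `‖u‖ ≤ δ ‖h‖ + √(1 + δ_t) ‖e'‖`. Hence
`‖h‖² ≤ (δ ‖h‖ + √(1 + δ_t) ‖e'‖)² + ‖c‖²`, a quadratic inequality in `‖h‖` whose solution is the
claimed bound.
-/

section Nrm

variable {ι : Type*} [Fintype ι]

lemma nrm_nonneg (x : ι → ℝ) : 0 ≤ nrm x := Real.sqrt_nonneg _

lemma sq_nrm (x : ι → ℝ) : nrm x ^ 2 = x ⬝ᵥ x := by
  rw [nrm, Real.sq_sqrt (by positivity)]
  simp only [dotProduct, sq]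

@[simp]
lemma nrm_zero : nrm (0 : ι → ℝ) = 0 := by simp [nrm]

@[simp]
lemma nrm_neg (x : ι → ℝ) : nrm (-x) = nrm x := by simp [nrm]

lemma nrm_pos {x : ι → ℝ} (hx : x ≠ 0) : 0 < nrm x := by
  refine (nrm_nonneg x).lt_of_ne' fun h => hx ?_
  rw [← dotProduct_self_eq_zero, ← sq_nrm, h, sq, zero_mul]

lemma dotProduct_le_nrm_mul_nrm (x y : ι → ℝ) : x ⬝ᵥ y ≤ nrm x * nrm y :=
  Real.sum_mul_le_sqrt_mul_sqrt _ x y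

lemma dotProduct_eq_zero_of_forall_nrm_le {r w : ι → ℝ}
    (h : ∀ ε : ℝ, nrm r ≤ nrm (r - ε • w)) : r ⬝ᵥ w = 0 := by
  have hN : 0 ≤ w ⬝ᵥ w := by rw [← sq_nrm]; positivity
  -- test minimality at `ε = (r ⬝ᵥ w) / (‖w‖² + 1)`, which needs no case split on `w = 0`
  have key := pow_le_pow_left₀ (nrm_nonneg r) (h ((r ⬝ᵥ w) / (w ⬝ᵥ w + 1))) 2
  simp only [sq_nrm, sub_dotProduct, dotProduct_sub, smul_dotProduct, dotProduct_smul,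
    dotProduct_comm w r, smul_eq_mul] at key
  have hN1 : 0 < w ⬝ᵥ w + 1 := by linarith
  field_simp at key
  nlinarith [sq_nonneg (r ⬝ᵥ w)]

end Nrm

section Support

variable {n : ℕ}

lemma spt_subset_iff {x : Fin n → ℝ} {U : Finset (Fin n)} : spt x ⊆ U ↔ ∀ i ∉ U, x i = 0 := by
  simp only [spt, Finset.subset_iff, Finset.mem_filter, Finset.mem_univ, true_and]
  exact forall_congr' fun i => not_imp_comm

lemma spt_sub_subset (x y : Fin n → ℝ) : spt (x - y) ⊆ spt x ∪ spt y :=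
  spt_subset_iff.2 fun _ hi => by simp_all [spt]

lemma spt_smul_add_smul_subset {U : Finset (Fin n)} {x y : Fin n → ℝ} (hx : spt x ⊆ U)
    (hy : spt y ⊆ U) (a b : ℝ) : spt (a • x + b • y) ⊆ U :=
  spt_subset_iff.2 fun i hi => by simp [spt_subset_iff.1 hx i hi, spt_subset_iff.1 hy i hi]

lemma spt_restr_subset (x : Fin n → ℝ) (U : Finset (Fin n)) : spt (restr x U) ⊆ U :=
  spt_subset_iff.2 fun _ hi => if_neg hi

lemma restr_dotProduct_self (x : Fin n → ℝ) (U : Finset (Fin n)) :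
    restr x U ⬝ᵥ x = nrm (restr x U) ^ 2 := by
  rw [sq_nrm]
  refine Finset.sum_congr rfl fun i _ => ?_
  by_cases hi : i ∈ U <;> simp [restr, hi]

lemma sq_nrm_eq_sq_nrm_restr_add_sq_nrm_restr_compl (x : Fin n → ℝ) (U : Finset (Fin n)) :
    nrm x ^ 2 = nrm (restr x U) ^ 2 + nrm (restr x Uᶜ) ^ 2 := by
  simp only [sq_nrm, dotProduct, ← Finset.sum_add_distrib]
  refine Finset.sum_congr rfl fun i _ => ?_
  by_cases hi : i ∈ U <;> simp [restr, hi]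

end Support

namespace RIP

variable {m n k : ℕ} {A : Matrix (Fin m) (Fin n) ℝ} {δ : ℝ}

lemma nonneg (hA : RIP A k δ) {x : Fin n → ℝ} (hk : (spt x).card ≤ k) (hx : x ≠ 0) : 0 ≤ δ := by
  obtain ⟨hlow, hup⟩ := hA x hk
  have := pow_pos (nrm_pos hx) 2
  nlinarith

lemma nrm_mulVec_le (hA : RIP A k δ) {x : Fin n → ℝ} (hk : (spt x).card ≤ k) :
    nrm (A *ᵥ x) ≤ √(1 + δ) * nrm x := by
  rw [← Real.sqrt_sq (nrm_nonneg (A *ᵥ x)), ← Real.sqrt_sq (nrm_nonneg x),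
    ← Real.sqrt_mul' _ (sq_nonneg _)]
  exact Real.sqrt_le_sqrt (hA x hk).2

lemma dotProduct_le (hA : RIP A k δ) {U : Finset (Fin n)} (hU : U.card ≤ k) {u v : Fin n → ℝ}
    (hu : spt u ⊆ U) (hv : spt v ⊆ U) :
    u ⬝ᵥ v ≤ (A *ᵥ u) ⬝ᵥ (A *ᵥ v) + δ * (nrm u * nrm v) := by
  rcases eq_or_ne u 0 with rfl | hu0
  · simp
  rcases eq_or_ne v 0 with rfl | hv0
  · simp
  set a := nrm v
  set b := nrm u
  have hab : 0 < b * a := mul_pos (nrm_pos hu0) (nrm_pos hv0)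
  have hcard (c : ℝ) : (spt (a • u + c • v)).card ≤ k :=
    (Finset.card_le_card (spt_smul_add_smul_subset hu hv a c)).trans hU
  -- polarisation: compare the lower RIP bound for `a u + b v` with the upper one for `a u - b v`
  have hlow := (hA _ (hcard b)).1
  have hup := (hA _ (hcard (-b))).2
  rw [sq_nrm, sq_nrm] at hlow hup
  simp only [mulVec_add, mulVec_smul, add_dotProduct, dotProduct_add, smul_dotProduct,
    dotProduct_smul, smul_eq_mul, dotProduct_comm v u, dotProduct_comm (A *ᵥ v) (A *ᵥ u),
    ← sq_nrm] at hlow hup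
  refine le_of_mul_le_mul_left ?_ hab
  linear_combination (hlow + hup) / 4

end RIP

lemma le_div_sqrt_add_div_of_sq_le {δ H E β : ℝ} (hδ0 : 0 ≤ δ) (hδ1 : δ < 1) (hE : 0 ≤ E)
    (hβ : 0 ≤ β) (hH : H ^ 2 ≤ (δ * H + E) ^ 2 + β ^ 2) :
    H ≤ β / √(1 - δ ^ 2) + E / (1 - δ) := by
  have hq2 : √(1 - δ ^ 2) ^ 2 = 1 - δ ^ 2 := Real.sq_sqrt (by nlinarith)
  have hq : 0 < √(1 - δ ^ 2) := Real.sqrt_pos.2 (by nlinarith)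
  set q := √(1 - δ ^ 2)
  set K := E / (1 - δ)
  have hd : 0 < 1 - δ := by linarith
  have hK : 0 ≤ K := div_nonneg hE hd.le
  have hEK : E = (1 - δ) * K := (mul_div_cancel₀ E hd.ne').symm
  by_contra! hlt
  have hβlt : β < q * (H - K) := by
    rw [div_add' _ _ _ hq.ne', div_lt_iff₀ hq] at hlt
    linarith
  -- with `H = K + H'`, the hypothesis reads `q² H'² + 2 (1 - δ) K H' ≤ β²`
  have hiden : H ^ 2 - (δ * H + E) ^ 2 = (q * (H - K)) ^ 2 + 2 * (1 - δ) * K * (H - K) := by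
    rw [mul_pow, hq2, hEK]; ring
  have hHK : 0 ≤ H - K := by nlinarith
  nlinarith [mul_nonneg (mul_nonneg hd.le hK) hHK]

section LeastSquares

variable {m n : ℕ} {A : Matrix (Fin m) (Fin n) ℝ}

lemma dotProduct_mulVec_eq_zero_of_forall_nrm_le {b : Fin m → ℝ} {zp : Fin n → ℝ}
    {T : Finset (Fin n)} (hzp : spt zp ⊆ T) (hmin : ∀ z, spt z ⊆ T → nrm (b - A *ᵥ zp) ≤ nrm (b - A *ᵥ z))
    {v : Fin n → ℝ} (hv : spt v ⊆ T) : (b - A *ᵥ zp) ⬝ᵥ (A *ᵥ v) = 0 :=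
  dotProduct_eq_zero_of_forall_nrm_le fun ε => by
    have hz : spt (zp + ε • v) ⊆ T := spt_subset_iff.2 fun i hi => by
      simp [spt_subset_iff.1 hzp i hi, spt_subset_iff.1 hv i hi]
    simpa only [mulVec_add, mulVec_smul, sub_add_eq_sub_sub] using hmin _ hz

lemma nrm_restr_le_of_dotProduct_eq_zero {k t : ℕ} {δ δt : ℝ} (hA : RIP A k δ)
    (hAt : RIP A t δt) (hδ : 0 ≤ δ) {U T : Finset (Fin n)} (hU : U.card ≤ k) (hT : T.card ≤ t)
    (hTU : T ⊆ U) {h : Fin n → ℝ} (hh : spt h ⊆ U) (e : Fin m → ℝ)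
    (horth : (A *ᵥ h + e) ⬝ᵥ (A *ᵥ restr h T) = 0) :
    nrm (restr h T) ≤ δ * nrm h + √(1 + δt) * nrm e := by
  set u := restr h T
  have hu : spt u ⊆ T := spt_restr_subset h T
  have hAuh : (A *ᵥ u) ⬝ᵥ (A *ᵥ h) = (A *ᵥ u) ⬝ᵥ (-e) := by
    rw [add_dotProduct] at horth
    rw [dotProduct_neg, dotProduct_comm, dotProduct_comm _ e]
    linarith
  have hAue : (A *ᵥ u) ⬝ᵥ (-e) ≤ √(1 + δt) * nrm u * nrm e := by
    refine (dotProduct_le_nrm_mul_nrm _ _).trans ?_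
    rw [nrm_neg]
    exact mul_le_mul_of_nonneg_right
      (hAt.nrm_mulVec_le ((Finset.card_le_card hu).trans hT)) (nrm_nonneg e)
  have hsq : nrm u ^ 2 ≤ nrm u * (δ * nrm h + √(1 + δt) * nrm e) :=
    calc nrm u ^ 2 = u ⬝ᵥ h := (restr_dotProduct_self h T).symm
      _ ≤ (A *ᵥ u) ⬝ᵥ (A *ᵥ h) + δ * (nrm u * nrm h) := hA.dotProduct_le hU (hu.trans hTU) hh
      _ ≤ nrm u * (δ * nrm h + √(1 + δt) * nrm e) := by rw [hAuh]; linarith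
  have hrhs : 0 ≤ δ * nrm h + √(1 + δt) * nrm e :=
    add_nonneg (mul_nonneg hδ (nrm_nonneg h)) (mul_nonneg (Real.sqrt_nonneg _) (nrm_nonneg e))
  nlinarith [nrm_nonneg u]

end LeastSquares

theorem stmt_9 {m n : ℕ} (A : Matrix (Fin m) (Fin n) ℝ) (s t : ℕ)
    (δst δt : ℝ) (hRIPst : RIP A (s + t) δst) (hδst : δst < 1) (hRIPt : RIP A t δt)
    (xS : Fin n → ℝ) (S : Finset (Fin n)) (hS : S.card ≤ s) (hxS : spt xS ⊆ S)
    (e' : Fin m → ℝ) (b : Fin m → ℝ) (hb : b = A.mulVec xS + e')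
    (S' : Finset (Fin n)) (hS' : S'.card = t)
    (zp : Fin n → ℝ) (hzp : spt zp ⊆ S')
    (hmin : ∀ z : Fin n → ℝ, spt z ⊆ S' → nrm (b - A.mulVec zp) ≤ nrm (b - A.mulVec z)) :
    nrm (xS - zp) ≤ (1 / Real.sqrt (1 - δst ^ 2)) * nrm (restr xS S'ᶜ)
      + (Real.sqrt (1 + δt) / (1 - δst)) * nrm e' := by
  set h := xS - zp
  have hU : (S ∪ S').card ≤ s + t := (Finset.card_union_le _ _).trans (add_le_add hS hS'.le)
  have hh : spt h ⊆ S ∪ S' := (spt_sub_subset _ _).trans (Finset.union_subset_union hxS hzp)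
  rcases eq_or_ne h 0 with h0 | h0
  · rw [h0, nrm_zero]
    have : 0 < 1 - δst := by linarith
    have := nrm_nonneg (restr xS S'ᶜ)
    have := nrm_nonneg e'
    positivity
  have hδ : 0 ≤ δst := hRIPst.nonneg ((Finset.card_le_card hh).trans hU) h0
  have hres : restr h S'ᶜ = restr xS S'ᶜ := by
    ext i
    by_cases hi : i ∈ S' <;> simp [h, restr, hi, spt_subset_iff.1 hzp i]
  have horth : (A *ᵥ h + e') ⬝ᵥ (A *ᵥ restr h S') = 0 := by
    rw [show A *ᵥ h + e' = b - A *ᵥ zp by rw [hb, mulVec_sub]; abel]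
    exact dotProduct_mulVec_eq_zero_of_forall_nrm_le hzp hmin (spt_restr_subset h S')
  have hT := nrm_restr_le_of_dotProduct_eq_zero hRIPst hRIPt hδ hU hS'.le
    Finset.subset_union_right hh e' horth
  have hquad : nrm h ^ 2 ≤ (δst * nrm h + √(1 + δt) * nrm e') ^ 2 + nrm (restr xS S'ᶜ) ^ 2 := by
    rw [sq_nrm_eq_sq_nrm_restr_add_sq_nrm_restr_compl h S', hres]
    gcongr
    exact nrm_nonneg _
  convert le_div_sqrt_add_div_of_sq_le hδ hδst (mul_nonneg (Real.sqrt_nonneg _) (nrm_nonneg _))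
    (nrm_nonneg _) hquad using 2 <;> ring
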